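/- Let F be a commutative perfect semi-field of characteristic 1 satisfying Assumptions 1 and 2 which is Banach, and let ∼ be a maximal congruence on F. Then ∼ is closed: its graph {(X, Y) ∈ F × F : X ∼ Y} is a closed subset of F × F for the metric (X, Y) ↦ r(X − Y). -/

import Mathlib

open scoped Pointwise

/-- A commutative perfect semi-field of characteristic `1`: an abelian group `(F, +, 0)`
together with a commutative, associative, idempotent operation `⊕` over which `+`
distributes, and such that `X ↦ n • X` is surjective for every `n > 0`. -/
class CharOneSemifield (F : Type*) extends AddCommGroup F where
  oplus : F → F → F
  oplus_comm : ∀ X Y : F, oplus X Y = oplus Y X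
  oplus_assoc : ∀ X Y Z : F, oplus (oplus X Y) Z = oplus X (oplus Y Z)
  oplus_idem : ∀ X : F, oplus X X = X
  add_oplus : ∀ X Y Z : F, X + oplus Y Z = oplus (X + Y) (X + Z)
  perfect : ∀ n : ℕ, 0 < n → Function.Surjective (fun X : F => n • X)

namespace CharOneSemifield

variable {F : Type*} [CharOneSemifield F]

/-- The canonical partial order on `F`: `X ≤ Y` iff `X ⊕ Y = Y`. -/
def cle (X Y : F) : Prop := oplus X Y = Y

/-- Assumption 1: every element is dominated by (rational multiples of) `E`:
for every `X` there are naturals `a, b` with `b > 0` and `-(a • E) ≤ b • X ≤ a • E`. -/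
def Assumption1 (E : F) : Prop :=
  ∀ X : F, ∃ a b : ℕ, 0 < b ∧ cle (-(a • E)) (b • X) ∧ cle (b • X) (a • E)

/-- `rval E X` is the infimum in `ℝ` of the ratios `a / b` over the pairs of naturals
`(a, b)` with `b > 0` and `-(a • E) ≤ b • X ≤ a • E`. -/
noncomputable def rval (E X : F) : ℝ :=
  sInf {t : ℝ | ∃ a b : ℕ, 0 < b ∧ t = (a : ℝ) / (b : ℝ) ∧
    cle (-(a • E)) (b • X) ∧ cle (b • X) (a • E)}

/-- Assumption 2: `r(X) = 0` implies `X = 0`. -/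
def Assumption2 (E : F) : Prop := ∀ X : F, rval E X = 0 → X = 0

/-- `F` is Banach if it is (sequentially) complete for the metric `(X, Y) ↦ r (X - Y)`. -/
def IsBanach (E : F) : Prop :=
  ∀ u : ℕ → F,
    (∀ ε : ℝ, 0 < ε → ∃ N : ℕ, ∀ m ≥ N, ∀ n ≥ N, rval E (u m - u n) < ε) →
    ∃ L : F, ∀ ε : ℝ, 0 < ε → ∃ N : ℕ, ∀ n ≥ N, rval E (u n - L) < ε

/-- A character of `F`: a map `φ : F → ℝ`, not identically zero, turning `⊕` into `max`
and `+` into `+`. -/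
def IsChar (φ : F → ℝ) : Prop :=
  (∃ X : F, φ X ≠ 0) ∧
  (∀ X Y : F, φ (oplus X Y) = max (φ X) (φ Y)) ∧
  (∀ X Y : F, φ (X + Y) = φ X + φ Y)

/-- The spectrum `S_E(F)`: the set of characters normalized by `φ E = 1`, viewed as a
subset of the product space `F → ℝ` (topology of pointwise convergence). -/
def specE (E : F) : Set (F → ℝ) := {φ : F → ℝ | IsChar φ ∧ φ E = 1}

/-- A congruence on `F`: an equivalence relation compatible with `-`, `+` and `⊕`. -/
structure IsCongruence (r : F → F → Prop) : Prop where
  equiv : Equivalence r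
  neg_compat : ∀ {X Y : F}, r X Y → r (-X) (-Y)
  add_compat : ∀ {X Y : F} (Z : F), r X Y → r (X + Z) (Y + Z)
  oplus_compat : ∀ {X Y : F} (Z : F), r X Y → r (oplus X Z) (oplus Y Z)

/-- A maximal congruence: a non-trivial congruence such that every coarser congruence is
either equal to it or trivial. -/
def IsMaximalCongruence (rel : F → F → Prop) : Prop :=
  IsCongruence rel ∧ (¬ ∀ X Y : F, rel X Y) ∧
  ∀ s : F → F → Prop, IsCongruence s → (∀ X Y : F, rel X Y → s X Y) →
    (∀ X Y : F, s X Y ↔ rel X Y) ∨ (∀ X Y : F, s X Y)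

end CharOneSemifield

/-!
The closure of a congruence for the metric `r(X - Y)` is again a congruence, because `+`, `-`
and `⊕` are `1`-Lipschitz (for `⊕` this is Birkhoff's inequality `|A ⊔ Z - B ⊔ Z| ≤ |A - B|`
in the lattice-ordered group `F`). It stays non-trivial: a congruence relating some `w` to `0`
with `r(E - w) < 1` has `b • (E - w) ≤ a • E` for some `a < b`, hence `0 ≤ E ≤ b • w`; since the
class of `0` is solid, it contains `E`, and then by Assumption 1 every element. By maximality
a maximal congruence therefore coincides with its closure.
-/

namespace LatticeOrderedAddCommGroup

variable {α : Type*} [AddCommGroup α] [Lattice α] [IsOrderedAddMonoid α]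

lemma nonneg_of_nsmul_nonneg {n : ℕ} (hn : n ≠ 0) {a : α} (h : 0 ≤ n • a) : 0 ≤ a := by
  obtain ⟨m, rfl⟩ := Nat.exists_eq_succ_of_ne_zero hn
  -- `S = 0 ⊔ a ⊔ ⋯ ⊔ m • a` satisfies `S ≤ a + S` because `0 ≤ (m + 1) • a`.
  set S := partialSups (fun k : ℕ => k • a) m
  have hS : S ≤ a + S := by
    refine partialSups_le _ _ _ fun k hk => ?_
    cases k with
    | zero =>
      calc (0 : ℕ) • a = 0 := zero_nsmul a
        _ ≤ (m + 1) • a := h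
        _ = a + m • a := succ_nsmul' a m
        _ ≤ a + S := add_le_add_right (le_partialSups (fun k : ℕ => k • a) m) a
    | succ j =>
      rw [succ_nsmul']
      exact add_le_add_right (le_partialSups_of_le (fun k : ℕ => k • a) (by omega)) a
  exact nonneg_of_le_add_left hS

lemma le_of_nsmul_le_nsmul {n : ℕ} (hn : n ≠ 0) {a b : α} (h : n • a ≤ n • b) : a ≤ b :=
  sub_nonneg.mp (nonneg_of_nsmul_nonneg hn (by rwa [nsmul_sub, sub_nonneg]))

lemma nsmul_add_nsmul_le_sup {k l : ℕ} (hkl : k + l ≠ 0) (a b : α) :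
    k • a + l • b ≤ (k + l) • a ⊔ (k + l) • b := by
  refine le_of_nsmul_le_nsmul hkl ?_
  set M := (k + l) • a ⊔ (k + l) • b
  calc (k + l) • (k • a + l • b) = k • ((k + l) • a) + l • ((k + l) • b) := by module
    _ ≤ k • M + l • M :=
      add_le_add (nsmul_le_nsmul_right le_sup_left k) (nsmul_le_nsmul_right le_sup_right l)
    _ = (k + l) • M := (add_nsmul M k l).symm

theorem nsmul_sup (n : ℕ) (a b : α) : n • (a ⊔ b) = n • a ⊔ n • b := by
  refine le_antisymm ?_
    (sup_le (nsmul_le_nsmul_right le_sup_left n) (nsmul_le_nsmul_right le_sup_right n))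
  induction n with
  | zero => simp
  | succ n ih =>
    have hmixed (c d : α) : c + n • d ≤ (n + 1) • c ⊔ (n + 1) • d := by
      simpa [add_comm 1 n] using nsmul_add_nsmul_le_sup (k := 1) (l := n) (by omega) c d
    calc (n + 1) • (a ⊔ b) = (a ⊔ b) + n • (a ⊔ b) := succ_nsmul' _ n
      _ ≤ (a ⊔ b) + (n • a ⊔ n • b) := add_le_add_right ih _
      _ = ((a + n • a) ⊔ (a + n • b)) ⊔ ((b + n • a) ⊔ (b + n • b)) := by
        rw [sup_add, add_sup, add_sup]
      _ ≤ (n + 1) • a ⊔ (n + 1) • b := by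
        refine sup_le (sup_le ?_ (hmixed a b)) (sup_le ?_ ?_)
        · exact (succ_nsmul' a n).symm.le.trans le_sup_left
        · exact (hmixed b a).trans_eq (sup_comm _ _)
        · exact (succ_nsmul' b n).symm.le.trans le_sup_right

theorem abs_nsmul (n : ℕ) (a : α) : |n • a| = n • |a| := by
  rw [abs, abs, nsmul_sup, smul_neg]

lemma posPart_le_abs (a : α) : a⁺ ≤ |a| := sup_le (le_abs_self a) (abs_nonneg a)

lemma negPart_le_abs (a : α) : a⁻ ≤ |a| := sup_le (neg_le_abs a) (abs_nonneg a)

end LatticeOrderedAddCommGroup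

namespace CharOneSemifield

open LatticeOrderedAddCommGroup (IsSolid nonneg_of_nsmul_nonneg posPart_le_abs negPart_le_abs)

variable {F : Type*} [CharOneSemifield F]

instance : SemilatticeSup F where
  le := cle
  sup := oplus
  le_refl := oplus_idem
  le_trans X Y Z (hXY : oplus X Y = Y) (hYZ : oplus Y Z = Z) :=
    show oplus X Z = Z by rw [← hYZ, ← oplus_assoc, hXY]
  le_antisymm X Y (hXY : oplus X Y = Y) (hYX : oplus Y X = X) := by
    rw [← hYX, oplus_comm, hXY]
  le_sup_left X Y := show oplus X (oplus X Y) = oplus X Y by rw [← oplus_assoc, oplus_idem]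
  le_sup_right X Y :=
    show oplus Y (oplus X Y) = oplus X Y by rw [oplus_comm X Y, ← oplus_assoc, oplus_idem]
  sup_le X Y Z (hXZ : oplus X Z = Z) (hYZ : oplus Y Z = Z) :=
    show oplus (oplus X Y) Z = Z by rw [oplus_assoc, hYZ, hXZ]

instance : IsOrderedAddMonoid F where
  add_le_add_left X Y (h : oplus X Y = Y) Z :=
    show oplus (X + Z) (Y + Z) = Y + Z by rw [add_comm X, add_comm Y, ← add_oplus, h]

instance : Lattice F where
  inf X Y := -(-X ⊔ -Y)
  inf_le_left _ _ := neg_le.mpr le_sup_left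
  inf_le_right _ _ := neg_le.mpr le_sup_right
  le_inf _ _ _ hY hZ := le_neg.mpr (sup_le (neg_le_neg hY) (neg_le_neg hZ))

lemma bounds_iff_nsmul_abs_le {E X : F} {a b : ℕ} :
    (cle (-(a • E)) (b • X) ∧ cle (b • X) (a • E)) ↔ b • |X| ≤ a • E := by
  rw [← LatticeOrderedAddCommGroup.abs_nsmul, abs_le', neg_le, and_comm]
  rfl

lemma Assumption1.exists_nsmul_abs_le {E : F} (h1 : Assumption1 E) (X : F) :
    ∃ a b : ℕ, 0 < b ∧ b • |X| ≤ a • E := by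
  obtain ⟨a, b, hb, hX⟩ := h1 X
  exact ⟨a, b, hb, bounds_iff_nsmul_abs_le.mp hX⟩

lemma Assumption1.nonneg {E : F} (h1 : Assumption1 E) : 0 ≤ E := by
  obtain ⟨a, b, hb, hE : -(a • E) ≤ b • E, -⟩ := h1 E
  refine nonneg_of_nsmul_nonneg (n := b + a) (by omega) ?_
  rw [add_nsmul]
  exact neg_le_iff_add_nonneg.mp hE

lemma rval_eq (E X : F) :
    rval E X = sInf {t : ℝ | ∃ a b : ℕ, 0 < b ∧ t = (a : ℝ) / (b : ℝ) ∧ b • |X| ≤ a • E} := by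
  simp only [rval, bounds_iff_nsmul_abs_le]

lemma rval_nonneg (E X : F) : 0 ≤ rval E X := by
  rw [rval_eq]
  exact Real.sInf_nonneg (by rintro _ ⟨a, b, -, rfl, -⟩; positivity)

lemma rval_le {E X : F} {a b : ℕ} (hb : 0 < b) (h : b • |X| ≤ a • E) :
    rval E X ≤ a / b := by
  rw [rval_eq]
  refine csInf_le ?_ ⟨a, b, hb, rfl, h⟩
  exact ⟨0, by rintro _ ⟨a, b, -, rfl, -⟩; positivity⟩

lemma exists_nsmul_abs_le_of_rval_lt {E X : F} (h1 : Assumption1 E) {c : ℝ} (h : rval E X < c) :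
    ∃ a b : ℕ, 0 < b ∧ (a : ℝ) / b < c ∧ b • |X| ≤ a • E := by
  rw [rval_eq] at h
  obtain ⟨a, b, hb, hX⟩ := h1.exists_nsmul_abs_le X
  obtain ⟨_, ⟨a, b, hb, rfl, hX⟩, hlt⟩ :=
    exists_lt_of_csInf_lt (by exact ⟨_, a, b, hb, rfl, hX⟩) h
  exact ⟨a, b, hb, hlt, hX⟩

lemma rval_zero (E : F) : rval E 0 = 0 :=
  le_antisymm (by simpa using rval_le (E := E) (X := 0) (a := 0) one_pos (by simp))
    (rval_nonneg E 0)

lemma rval_congr_abs (E : F) {X Y : F} (h : |X| = |Y|) : rval E X = rval E Y := by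
  simp only [rval_eq, h]

lemma rval_neg (E X : F) : rval E (-X) = rval E X := rval_congr_abs E (abs_neg X)

lemma rval_sub_comm (E X Y : F) : rval E (X - Y) = rval E (Y - X) :=
  rval_congr_abs E (abs_sub_comm X Y)

lemma rval_mono_abs {E X Y : F} (h1 : Assumption1 E) (h : |X| ≤ |Y|) : rval E X ≤ rval E Y := by
  rw [rval_eq E Y]
  obtain ⟨a, b, hb, hY⟩ := h1.exists_nsmul_abs_le Y
  refine le_csInf ⟨_, a, b, hb, rfl, hY⟩ ?_
  rintro _ ⟨a, b, hb, rfl, hY⟩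
  exact rval_le hb ((nsmul_le_nsmul_right h b).trans hY)

lemma rval_add_le {E : F} (h1 : Assumption1 E) (X Y : F) :
    rval E (X + Y) ≤ rval E X + rval E Y := by
  refine le_of_forall_pos_lt_add fun ε hε => ?_
  obtain ⟨a, b, hb, hab, hX⟩ :=
    exists_nsmul_abs_le_of_rval_lt h1 (lt_add_of_pos_right (rval E X) (half_pos hε))
  obtain ⟨c, d, hd, hcd, hY⟩ :=
    exists_nsmul_abs_le_of_rval_lt h1 (lt_add_of_pos_right (rval E Y) (half_pos hε))
  have hXY : (b * d) • |X + Y| ≤ (a * d + c * b) • E :=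
    calc (b * d) • |X + Y| ≤ (b * d) • (|X| + |Y|) := nsmul_le_nsmul_right (abs_add_le X Y) _
      _ = d • (b • |X|) + b • (d • |Y|) := by module
      _ ≤ d • (a • E) + b • (c • E) :=
        add_le_add (nsmul_le_nsmul_right hX d) (nsmul_le_nsmul_right hY b)
      _ = (a * d + c * b) • E := by module
  calc rval E (X + Y) ≤ ((a * d + c * b : ℕ) : ℝ) / (b * d : ℕ) := rval_le (by positivity) hXY
    _ = a / b + c / d := by push_cast; field_simp
    _ < rval E X + rval E Y + ε := by linarith

lemma rval_sup_sub_sup_le {E : F} (h1 : Assumption1 E) (A B Z : F) :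
    rval E (A ⊔ Z - B ⊔ Z) ≤ rval E (A - B) :=
  rval_mono_abs h1 (abs_sup_sub_sup_le_abs A B Z)

namespace IsCongruence

variable {rel : F → F → Prop}

lemma rel_iff_sub_rel_zero (hc : IsCongruence rel) {X Y : F} : rel X Y ↔ rel (X - Y) 0 := by
  constructor <;> intro h
  · simpa [sub_eq_add_neg] using hc.add_compat (-Y) h
  · simpa using hc.add_compat Y h

lemma add_rel_zero (hc : IsCongruence rel) {X Y : F} (hX : rel X 0) (hY : rel Y 0) :
    rel (X + Y) 0 :=
  hc.equiv.trans (by simpa using hc.add_compat Y hX) hY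

lemma neg_rel_zero (hc : IsCongruence rel) {X : F} (hX : rel X 0) : rel (-X) 0 := by
  simpa using hc.neg_compat hX

lemma nsmul_rel_zero (hc : IsCongruence rel) {X : F} (hX : rel X 0) (n : ℕ) :
    rel (n • X) 0 := by
  induction n with
  | zero => simpa using hc.equiv.refl 0
  | succ n ih => simpa [succ_nsmul] using hc.add_rel_zero ih hX

lemma abs_rel_zero (hc : IsCongruence rel) {X : F} (hX : rel X 0) : rel |X| 0 := by
  have h₁ : rel (X ⊔ -X) (0 ⊔ -X) := hc.oplus_compat (-X) hX
  have h₂ : rel (-X ⊔ 0) (0 ⊔ 0) := hc.oplus_compat 0 (hc.neg_rel_zero hX)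
  rw [sup_idem, sup_comm] at h₂
  exact hc.equiv.trans h₁ h₂

lemma rel_zero_of_nonneg_of_le (hc : IsCongruence rel) {Y Z : F} (h0 : 0 ≤ Y) (hYZ : Y ≤ Z)
    (hZ : rel Z 0) : rel Y 0 := by
  have h : rel (Z ⊔ Y) (0 ⊔ Y) := hc.oplus_compat Y hZ
  rw [sup_eq_left.mpr hYZ, sup_eq_right.mpr h0] at h
  exact hc.equiv.trans (hc.equiv.symm h) hZ

theorem isSolid_rel_zero (hc : IsCongruence rel) : IsSolid {X | rel X 0} := by
  intro Z hZ Y hYZ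
  have habs : rel |Y| 0 := hc.rel_zero_of_nonneg_of_le (abs_nonneg Y) hYZ (hc.abs_rel_zero hZ)
  have hpos : rel Y⁺ 0 := hc.rel_zero_of_nonneg_of_le (posPart_nonneg Y) (posPart_le_abs Y) habs
  have hneg : rel Y⁻ 0 := hc.rel_zero_of_nonneg_of_le (negPart_nonneg Y) (negPart_le_abs Y) habs
  show rel Y 0
  rw [← posPart_sub_negPart Y, sub_eq_add_neg]
  exact hc.add_rel_zero hpos (hc.neg_rel_zero hneg)

theorem trivial_of_rel_zero {E : F} (hc : IsCongruence rel) (h1 : Assumption1 E) (hE : rel E 0)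
    (X Y : F) : rel X Y := by
  rw [hc.rel_iff_sub_rel_zero]
  obtain ⟨a, b, hb, hab⟩ := h1.exists_nsmul_abs_le (X - Y)
  refine hc.isSolid_rel_zero (hc.nsmul_rel_zero hE a) ?_
  calc |X - Y| ≤ b • |X - Y| := le_self_nsmul (abs_nonneg _) hb.ne'
    _ ≤ a • E := hab
    _ = |a • E| := (abs_of_nonneg (nsmul_nonneg h1.nonneg a)).symm

theorem rel_zero_of_rval_sub_lt_one {E w : F} (hc : IsCongruence rel) (h1 : Assumption1 E)
    (hw : rel w 0) (hEw : rval E (E - w) < 1) : rel E 0 := by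
  obtain ⟨a, b, hb, hlt, hbound⟩ := exists_nsmul_abs_le_of_rval_lt h1 hEw
  have hab : a < b := by exact_mod_cast (div_lt_one (by positivity)).mp hlt
  have hE := h1.nonneg
  have hEbw : E ≤ b • w :=
    calc E ≤ (b - a) • E := le_self_nsmul hE (by omega)
      _ = b • E - a • E := by rw [sub_nsmul E hab.le, sub_eq_add_neg]
      _ ≤ b • w := by
        rw [sub_le_comm, ← nsmul_sub]
        exact (le_abs_self _).trans ((LatticeOrderedAddCommGroup.abs_nsmul b _).trans_le hbound)
  refine hc.isSolid_rel_zero (hc.nsmul_rel_zero hw b) ?_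
  rw [abs_of_nonneg hE]
  exact hEbw.trans (le_abs_self _)

end IsCongruence

/-- The closure of the graph of `rel` in `F × F` for the metric `(X, Y) ↦ r (X - Y)`. -/
def closureRel (E : F) (rel : F → F → Prop) (A B : F) : Prop :=
  ∀ ε > 0, ∃ A' B', rel A' B' ∧ rval E (A' - A) < ε ∧ rval E (B' - B) < ε

variable {E : F} {rel : F → F → Prop}

lemma closureRel_of_rel {A B : F} (h : rel A B) : closureRel E rel A B :=
  fun ε hε => ⟨A, B, h, by simpa [rval_zero] using hε, by simpa [rval_zero] using hε⟩

lemma closureRel_trans (hc : IsCongruence rel) (h1 : Assumption1 E) {A B C : F}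
    (hAB : closureRel E rel A B) (hBC : closureRel E rel B C) : closureRel E rel A C := by
  intro ε hε
  obtain ⟨A', B', hAB', dA, dB⟩ := hAB (ε / 3) (by positivity)
  obtain ⟨B'', C', hBC', dB', dC⟩ := hBC (ε / 3) (by positivity)
  -- shift `A'` by `B'' - B'` so that it becomes related to `B''`, hence to `C'`
  have hrel : rel (A' + (B'' - B')) C' :=
    hc.equiv.trans (by simpa using hc.add_compat (B'' - B') hAB') hBC'
  refine ⟨_, C', hrel, ?_, by linarith⟩
  calc rval E (A' + (B'' - B') - A) = rval E ((A' - A) + ((B'' - B) + (B - B'))) := by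
        congr 1; abel
    _ ≤ rval E (A' - A) + (rval E (B'' - B) + rval E (B - B')) :=
        (rval_add_le h1 _ _).trans (add_le_add_right (rval_add_le h1 _ _) _)
    _ < ε := by rw [rval_sub_comm E B]; linarith

theorem isCongruence_closureRel (hc : IsCongruence rel) (h1 : Assumption1 E) :
    IsCongruence (closureRel E rel) where
  equiv :=
    { refl _ := closureRel_of_rel (hc.equiv.refl _)
      symm h ε hε := by
        obtain ⟨A', B', hr, dA, dB⟩ := h ε hε
        exact ⟨B', A', hc.equiv.symm hr, dB, dA⟩
      trans := closureRel_trans hc h1 }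
  neg_compat h ε hε := by
    obtain ⟨A', B', hr, dA, dB⟩ := h ε hε
    refine ⟨-A', -B', hc.neg_compat hr, ?_, ?_⟩
    · rwa [← neg_sub', rval_neg]
    · rwa [← neg_sub', rval_neg]
  add_compat Z h ε hε := by
    obtain ⟨A', B', hr, dA, dB⟩ := h ε hε
    exact ⟨A' + Z, B' + Z, hc.add_compat Z hr, by rwa [add_sub_add_right_eq_sub],
      by rwa [add_sub_add_right_eq_sub]⟩
  oplus_compat Z h ε hε := by
    obtain ⟨A', B', hr, dA, dB⟩ := h ε hε
    exact ⟨A' ⊔ Z, B' ⊔ Z, hc.oplus_compat Z hr, (rval_sup_sub_sup_le h1 _ _ Z).trans_lt dA,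
      (rval_sup_sub_sup_le h1 _ _ Z).trans_lt dB⟩

theorem IsCongruence.not_forall_closureRel (hc : IsCongruence rel) (h1 : Assumption1 E)
    (hrel : ¬ ∀ X Y, rel X Y) : ¬ ∀ X Y, closureRel E rel X Y := by
  intro h
  obtain ⟨A', B', hAB', dA, dB⟩ := h E 0 (1 / 2) (by norm_num)
  refine hrel (hc.trivial_of_rel_zero h1 (hc.rel_zero_of_rval_sub_lt_one h1
    (hc.rel_iff_sub_rel_zero.mp hAB') ?_))
  calc rval E (E - (A' - B')) = rval E (-(A' - E) + (B' - 0)) := by congr 1; abel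
    _ ≤ rval E (A' - E) + rval E (B' - 0) := by
        simpa only [rval_neg] using rval_add_le h1 (-(A' - E)) (B' - 0)
    _ < 1 := by linarith

theorem IsMaximalCongruence.closureRel_iff (hm : IsMaximalCongruence rel) (h1 : Assumption1 E)
    {A B : F} : closureRel E rel A B ↔ rel A B :=
  ((hm.2.2 _ (isCongruence_closureRel hm.1 h1) fun _ _ => closureRel_of_rel).resolve_right
    (hm.1.not_forall_closureRel h1 hm.2.1)) A B

end CharOneSemifield

open CharOneSemifield

theorem stmt12_general {F : Type*} [CharOneSemifield F] (E : F)
    (h1 : Assumption1 E)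
    (rel : F → F → Prop) (hm : IsMaximalCongruence rel)
    (u v : ℕ → F) (X Y : F)
    (hrel : ∀ n : ℕ, rel (u n) (v n))
    (hu : ∀ ε : ℝ, 0 < ε → ∃ N : ℕ, ∀ n ≥ N, rval E (u n - X) < ε)
    (hv : ∀ ε : ℝ, 0 < ε → ∃ N : ℕ, ∀ n ≥ N, rval E (v n - Y) < ε) :
    rel X Y := by
  refine (hm.closureRel_iff h1).mp fun ε hε => ?_
  obtain ⟨N, hN⟩ := hu ε hε
  obtain ⟨M, hM⟩ := hv ε hε
  exact ⟨u (max N M), v (max N M), hrel _, hN _ (le_max_left N M), hM _ (le_max_right N M)⟩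

/-- a maximal congruence on a Banach semi-field is closed: its graph is
(sequentially) closed in `F × F` for the metric `(X, Y) ↦ r (X - Y)`. -/
theorem stmt12 {F : Type*} [CharOneSemifield F] (E : F)
    (h1 : Assumption1 E) (h2 : Assumption2 E) (hB : IsBanach E)
    (rel : F → F → Prop) (hm : IsMaximalCongruence rel)
    (u v : ℕ → F) (X Y : F)
    (hrel : ∀ n : ℕ, rel (u n) (v n))
    (hu : ∀ ε : ℝ, 0 < ε → ∃ N : ℕ, ∀ n ≥ N, rval E (u n - X) < ε)
    (hv : ∀ ε : ℝ, 0 < ε → ∃ N : ℕ, ∀ n ≥ N, rval E (v n - Y) < ε) :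
    rel X Y :=
  stmt12_general E h1 rel hm u v X Y hrel hu hv
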